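/- arXiv:1708.07298 — 2 statements merged into one kernel-verified Lean document; each statement's English description precedes it below -/
import Mathlib

section
/- The derivative of the Prabhakar function with respect to its argument satisfies (d/dz) E_{α,β}^γ(z) = γ E_{α,α+β}^{γ+1}(z) for all z ∈ ℂ. -/
/-!
`prabhakar α β γ` is the power series `∑ cₖ zᵏ` with `cₖ = (γ)ₖ / (k! Γ(αk + β))`. Since
`‖(γ)ₖ‖ ≤ k! (1 + ‖γ‖)ᵏ`, and since Euler's limit formula gives `‖Γ(x + iy)‖ ≥ Γ(x) e^{-y²/x}`
for `x ≥ 1`, the coefficients decay faster than any geometric sequence when `Re α > 0`: the series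
is entire and can be differentiated termwise. Then `(γ)ₖ₊₁ = γ (γ + 1)ₖ` and
`α (k + 1) + β = α k + (α + β)` turn `(k + 1) cₖ₊₁` into `γ` times the `k`-th coefficient of
`prabhakar α (α + β) (γ + 1)`.
-/

open scoped Real
open Complex Filter

/-- The Prabhakar (three-parameter Mittag-Leffler) function, defined by its
entire power series, with reciprocal Gamma understood as `0` at poles. -/
noncomputable def prabhakar (α β γ z : ℂ) : ℂ :=
  ∑' k : ℕ, (ascPochhammer ℂ k).eval γ * z ^ k / ((Nat.factorial k : ℂ) * Complex.Gamma (α * k + β))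

open Finset
open scoped Nat

theorem norm_ascPochhammer_eval_le {R : Type*} [NormedRing R] [NormOneClass R] (x : R) (k : ℕ) :
    ‖(ascPochhammer R k).eval x‖ ≤ k ! * (1 + ‖x‖) ^ k := by
  induction k with
  | zero => simp
  | succ k ih =>
    have hx : ‖x + k‖ ≤ (1 + ‖x‖) * (k + 1) := by
      calc ‖x + k‖ ≤ ‖x‖ + k := (norm_add_le _ _).trans (by simpa using Nat.norm_cast_le (α := R) k)
        _ ≤ (1 + ‖x‖) * (k + 1) := by nlinarith [norm_nonneg x]
    rw [ascPochhammer_succ_eval, Nat.factorial_succ]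
    calc ‖(ascPochhammer R k).eval x * (x + k)‖
        ≤ (k ! * (1 + ‖x‖) ^ k) * ((1 + ‖x‖) * (k + 1)) :=
          (norm_mul_le _ _).trans (mul_le_mul ih hx (norm_nonneg _) (by positivity))
      _ = ((k + 1) * k ! : ℕ) * (1 + ‖x‖) ^ (k + 1) := by push_cast; ring

theorem hasDerivAt_tsum_mul_pow {𝕜 : Type*} [RCLike 𝕜] {c : ℕ → 𝕜}
    (hc : ∀ r : ℝ, 0 ≤ r → Summable fun n ↦ ‖c n‖ * r ^ n) (z : 𝕜) :
    HasDerivAt (fun w ↦ ∑' n, c n * w ^ n) (∑' n, (n + 1) * c (n + 1) * z ^ n) z := by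
  set ρ := ‖z‖ + 1
  have hρ : 1 ≤ ρ := by simp [ρ]
  have hz : z ∈ Metric.ball (0 : 𝕜) ρ := mem_ball_zero_iff.2 (by simp [ρ])
  have hbound : ∀ n, ∀ w ∈ Metric.ball (0 : 𝕜) ρ,
      ‖c n * (n * w ^ (n - 1))‖ ≤ ‖c n‖ * (2 * ρ) ^ n := by
    intro n w hw
    rw [norm_mul, norm_mul, norm_pow, RCLike.norm_natCast, mul_pow]
    gcongr
    · exact_mod_cast Nat.lt_two_pow_self.le
    · exact (pow_le_pow_left₀ (norm_nonneg w) (mem_ball_zero_iff.1 hw).le _).trans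
        (pow_le_pow_right₀ hρ (Nat.sub_le n 1))
  have hsum0 : Summable fun n ↦ c n * (0 : 𝕜) ^ n :=
    summable_of_ne_finset_zero (s := {0}) fun n hn ↦ by
      simp [zero_pow (Finset.notMem_singleton.1 hn)]
  have hderiv := hasDerivAt_tsum_of_isPreconnected (hc (2 * ρ) (by positivity))
    Metric.isOpen_ball (convex_ball (0 : 𝕜) ρ).isPreconnected
    (fun n w _ ↦ (hasDerivAt_pow n w).const_mul (c n)) hbound
    (Metric.mem_ball_self (by positivity)) hsum0 hz
  rw [(Summable.of_norm_bounded (hc _ (by positivity)) fun n ↦ hbound n z hz).tsum_eq_zero_add]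
    at hderiv
  refine hderiv.congr_deriv ?_
  simp only [CharP.cast_eq_zero, zero_mul, mul_zero, zero_add, add_tsub_cancel_right,
    Nat.cast_add, Nat.cast_one]
  exact tsum_congr fun n ↦ by ring

theorem Complex.norm_ofReal_add_mul_I_le {t : ℝ} (ht : 0 < t) (y : ℝ) :
    ‖(t + y * I : ℂ)‖ ≤ t * Real.exp (y ^ 2 / (2 * t ^ 2)) := by
  have hexp : Real.exp (y ^ 2 / (2 * t ^ 2)) ^ 2 = Real.exp (y ^ 2 / t ^ 2) := by
    rw [← Real.exp_nat_mul]; congr 1; field_simp; ring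
  refine (pow_le_pow_iff_left₀ (norm_nonneg _) (by positivity) two_ne_zero).1 ?_
  rw [Complex.sq_norm, normSq_add_mul_I, mul_pow, hexp]
  have := Real.add_one_le_exp (y ^ 2 / t ^ 2)
  calc t ^ 2 + y ^ 2 = t ^ 2 * (y ^ 2 / t ^ 2 + 1) := by field_simp; ring
    _ ≤ t ^ 2 * Real.exp (y ^ 2 / t ^ 2) := by gcongr

theorem sum_range_inv_add_sq_le {x : ℝ} (hx : 1 ≤ x) (n : ℕ) :
    ∑ j ∈ range n, 1 / (x + j) ^ 2 ≤ 2 / x := by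
  have hterm : ∀ j : ℕ, 1 / (x + j) ^ 2 ≤ 2 / (x + j) - 2 / (x + (j + 1 : ℕ)) := by
    intro j
    have hj : 1 ≤ x + j := by linarith [(Nat.cast_nonneg j : (0 : ℝ) ≤ j)]
    rw [div_sub_div _ _ (by positivity) (by positivity), div_le_div_iff₀ (by positivity)
      (by positivity)]
    push_cast
    nlinarith
  calc ∑ j ∈ range n, 1 / (x + j) ^ 2
      ≤ ∑ j ∈ range n, (2 / (x + j) - 2 / (x + (j + 1 : ℕ))) := sum_le_sum fun j _ ↦ hterm j
    _ = 2 / x - 2 / (x + n) := by rw [sum_range_sub' (fun j : ℕ ↦ 2 / (x + j))]; simp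
    _ ≤ 2 / x := by linarith [show 0 ≤ 2 / (x + n) by positivity]

theorem Complex.prod_range_norm_add_le {s : ℂ} (hs : 1 ≤ s.re) (n : ℕ) :
    ∏ j ∈ range n, ‖s + j‖ ≤ Real.exp (s.im ^ 2 / s.re) * ∏ j ∈ range n, (s.re + j) := by
  have hpos : ∀ j : ℕ, 0 < s.re + j := fun j ↦ by positivity
  calc ∏ j ∈ range n, ‖s + j‖
      ≤ ∏ j ∈ range n, (s.re + j) * Real.exp (s.im ^ 2 / (2 * (s.re + j) ^ 2)) := by
        refine prod_le_prod (fun _ _ ↦ norm_nonneg _) fun j _ ↦ ?_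
        have hsj : s + j = ((s.re + j : ℝ) : ℂ) + s.im * I := by
          apply Complex.ext <;> simp
        rw [hsj]
        exact norm_ofReal_add_mul_I_le (hpos j) s.im
    _ = Real.exp (s.im ^ 2 / 2 * ∑ j ∈ range n, 1 / (s.re + j) ^ 2) *
          ∏ j ∈ range n, (s.re + j) := by
        rw [prod_mul_distrib, ← Real.exp_sum, mul_sum, mul_comm]
        congr 2
        exact sum_congr rfl fun j _ ↦ by field_simp
    _ ≤ Real.exp (s.im ^ 2 / s.re) * ∏ j ∈ range n, (s.re + j) := by
        gcongr
        calc s.im ^ 2 / 2 * ∑ j ∈ range n, 1 / (s.re + j) ^ 2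
            ≤ s.im ^ 2 / 2 * (2 / s.re) := by gcongr; exact sum_range_inv_add_sq_le hs n
          _ = s.im ^ 2 / s.re := by field_simp

theorem Complex.Gamma_re_mul_exp_le_norm_Gamma {s : ℂ} (hs : 1 ≤ s.re) :
    Real.Gamma s.re * Real.exp (-(s.im ^ 2 / s.re)) ≤ ‖Gamma s‖ := by
  refine le_of_tendsto_of_tendsto ((Real.GammaSeq_tendsto_Gamma s.re).mul_const _)
    (GammaSeq_tendsto_Gamma s).norm ?_
  filter_upwards [eventually_ge_atTop 1] with n hn
  have hprod' : 0 < ∏ j ∈ range (n + 1), ‖s + j‖ := by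
    refine prod_pos fun j _ ↦ norm_pos_iff.2 fun h ↦ ?_
    have : s.re + j = 0 := by simpa using congrArg re h
    linarith [(Nat.cast_nonneg j : (0 : ℝ) ≤ j)]
  rw [Real.GammaSeq, GammaSeq, norm_div, norm_mul, norm_natCast_cpow_of_pos hn, norm_prod,
    Complex.norm_natCast, Real.exp_neg]
  calc (n : ℝ) ^ s.re * n ! / (∏ j ∈ range (n + 1), (s.re + j)) * (Real.exp (s.im ^ 2 / s.re))⁻¹
      = (n : ℝ) ^ s.re * n ! / (Real.exp (s.im ^ 2 / s.re) * ∏ j ∈ range (n + 1), (s.re + j)) := by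
        field_simp
    _ ≤ (n : ℝ) ^ s.re * n ! / ∏ j ∈ range (n + 1), ‖s + j‖ :=
        div_le_div_of_nonneg_left (by positivity) hprod' (prod_range_norm_add_le hs _)

theorem Real.factorial_le_Gamma {x : ℝ} {m : ℕ} (hx : 2 ≤ x) (hm : m + 1 ≤ x) :
    (m ! : ℝ) ≤ Real.Gamma x := by
  rcases m with _ | m
  · simpa using Real.Gamma_strictMonoOn_Ici.monotoneOn Set.self_mem_Ici hx hx
  · rw [← Real.Gamma_nat_eq_factorial]
    exact Real.Gamma_strictMonoOn_Ici.monotoneOn (by simp; linarith) hx (by exact_mod_cast hm)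

theorem Real.exists_pow_le_mul_Gamma {a S : ℝ} (ha : 0 < a) (hS : 0 ≤ S) :
    ∃ C, ∀ (k : ℕ) (x : ℝ), 2 ≤ x → a * k + 1 ≤ x → S ^ k ≤ C * Real.Gamma x := by
  set p := ⌈a⁻¹⌉₊
  set T := max S 1 ^ p
  refine ⟨T * Real.exp T, fun k x hx hkx ↦ ?_⟩
  set m := ⌊a * k⌋₊
  have hm : (m : ℝ) + 1 ≤ x := by linarith [Nat.floor_le (by positivity : 0 ≤ a * k)]
  have hkm : k ≤ p * (m + 1) := by
    have h1 : a * k < m + 1 := Nat.lt_floor_add_one _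
    have h2 : a⁻¹ ≤ p := Nat.le_ceil _
    have : (k : ℝ) ≤ p * (m + 1) := calc
      (k : ℝ) = a⁻¹ * (a * k) := by field_simp
      _ ≤ p * (m + 1) := by gcongr
    exact_mod_cast this
  calc S ^ k ≤ max S 1 ^ k := pow_le_pow_left₀ hS (le_max_left _ _) _
    _ ≤ max S 1 ^ (p * (m + 1)) := pow_le_pow_right₀ (le_max_right _ _) hkm
    _ = T * (T ^ m / m ! * m !) := by
        rw [pow_mul, pow_succ, div_mul_cancel₀ _ (by positivity)]; ring
    _ ≤ T * (Real.exp T * Real.Gamma x) := by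
        gcongr
        · exact Real.pow_div_factorial_le_exp T (by positivity) m
        · exact Real.factorial_le_Gamma hx hm
    _ = T * Real.exp T * Real.Gamma x := by ring

theorem Complex.exists_pow_div_norm_Gamma_le {α : ℂ} (hα : 0 < α.re) (β : ℂ) {R : ℝ}
    (hR : 0 ≤ R) : ∃ C, ∀ᶠ k : ℕ in atTop, R ^ k / ‖Gamma (α * k + β)‖ ≤ C := by
  set d := ‖α‖ + ‖β‖
  set D := 2 * d ^ 2 / α.re
  obtain ⟨C, hC⟩ := Real.exists_pow_le_mul_Gamma (half_pos hα) (by positivity : 0 ≤ R * Real.exp D)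
  have hC0 : 0 ≤ C := zero_le_one.trans (by simpa using hC 0 2 le_rfl (by norm_num))
  refine ⟨C, ?_⟩
  filter_upwards [eventually_ge_atTop 1,
    tendsto_natCast_atTop_atTop.eventually_ge_atTop (2 * (2 + |β.re|) / α.re)] with k hk1 hk
  set s := α * k + β
  have hk' : 2 * (2 + |β.re|) ≤ α.re * k := by rwa [div_le_iff₀' hα] at hk
  have hk1 : (1 : ℝ) ≤ k := by exact_mod_cast hk1
  have hak : 4 ≤ α.re * k := by linarith [abs_nonneg β.re]
  have hx : α.re * k / 2 + 2 ≤ s.re := by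
    simp only [add_re, mul_re, natCast_re, natCast_im, mul_zero, sub_zero, s]
    linarith [neg_abs_le β.re]
  have him : s.im ^ 2 / s.re ≤ D * k := by
    have hy : |s.im| ≤ d * k := calc
      |s.im| ≤ ‖s‖ := abs_im_le_norm s
      _ ≤ ‖α‖ * k + ‖β‖ := by
        refine (norm_add_le _ _).trans_eq ?_; rw [norm_mul, Complex.norm_natCast]
      _ ≤ d * k := by simp only [d]; nlinarith [norm_nonneg α, norm_nonneg β]
    calc s.im ^ 2 / s.re ≤ (d * k) ^ 2 / (α.re * k / 2) :=
          div_le_div₀ (by positivity) (sq_le_sq' (abs_le.1 hy).1 (abs_le.1 hy).2) (by positivity)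
            (by linarith)
      _ = D * k := by simp only [D]; field_simp
  have hΓ : 0 < ‖Gamma s‖ := norm_pos_iff.2 (Gamma_ne_zero_of_re_pos (by linarith))
  rw [div_le_iff₀ hΓ]
  calc R ^ k = (R * Real.exp D) ^ k * Real.exp (-(D * k)) := by
        rw [mul_pow, ← Real.exp_nat_mul, mul_assoc, ← Real.exp_add]; simp [mul_comm]
    _ ≤ C * Real.Gamma s.re * Real.exp (-(s.im ^ 2 / s.re)) := by
        have hCk := hC k s.re (by linarith) (by linarith)
        exact mul_le_mul hCk (Real.exp_le_exp.2 (by linarith)) (by positivity)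
          ((by positivity : (0 : ℝ) ≤ _).trans hCk)
    _ ≤ C * ‖Gamma s‖ := by
        rw [mul_assoc]
        exact mul_le_mul_of_nonneg_left (Gamma_re_mul_exp_le_norm_Gamma (by linarith)) hC0

theorem Complex.summable_pow_div_norm_Gamma {α : ℂ} (hα : 0 < α.re) (β : ℂ) {R : ℝ}
    (hR : 0 ≤ R) : Summable fun k : ℕ ↦ R ^ k / ‖Gamma (α * k + β)‖ := by
  obtain ⟨C, hC⟩ := exists_pow_div_norm_Gamma_le hα β (by positivity : 0 ≤ 2 * R + 2)
  refine .of_norm_bounded_eventually_nat (summable_geometric_two.mul_left C) ?_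
  filter_upwards [hC] with k hk
  rw [Real.norm_of_nonneg (by positivity)]
  calc R ^ k / ‖Gamma (α * k + β)‖
      = (2 * R + 2) ^ k / ‖Gamma (α * k + β)‖ * (R / (2 * R + 2)) ^ k := by
        rw [div_pow]; field_simp
    _ ≤ (2 * R + 2) ^ k / ‖Gamma (α * k + β)‖ * (1 / 2) ^ k := by
        refine mul_le_mul_of_nonneg_left (pow_le_pow_left₀ (by positivity) ?_ k) (by positivity)
        rw [div_le_iff₀ (by positivity)]
        linarith
    _ ≤ C * (1 / 2) ^ k := by gcongr

noncomputable def prabhakarCoeff (α β γ : ℂ) (k : ℕ) : ℂ :=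
  (ascPochhammer ℂ k).eval γ / (k ! * Gamma (α * k + β))

theorem prabhakar_eq_tsum (α β γ z : ℂ) :
    prabhakar α β γ z = ∑' k, prabhakarCoeff α β γ k * z ^ k :=
  tsum_congr fun _ ↦ div_mul_eq_mul_div _ _ _ |>.symm

theorem summable_norm_prabhakarCoeff_mul_pow {α : ℂ} (hα : 0 < α.re) (β γ : ℂ) {r : ℝ}
    (hr : 0 ≤ r) : Summable fun k ↦ ‖prabhakarCoeff α β γ k‖ * r ^ k := by
  refine (summable_pow_div_norm_Gamma hα β (by positivity : 0 ≤ (1 + ‖γ‖) * r)).of_nonneg_of_le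
    (fun k ↦ by positivity) fun k ↦ ?_
  have hpoch : ‖(ascPochhammer ℂ k).eval γ‖ / k ! ≤ (1 + ‖γ‖) ^ k := by
    rw [div_le_iff₀' (by positivity)]
    exact norm_ascPochhammer_eval_le γ k
  calc ‖prabhakarCoeff α β γ k‖ * r ^ k
      = ‖(ascPochhammer ℂ k).eval γ‖ / k ! * r ^ k / ‖Gamma (α * k + β)‖ := by
        rw [prabhakarCoeff, norm_div, norm_mul, Complex.norm_natCast, div_mul_eq_mul_div,
          div_mul_eq_mul_div, div_div]
    _ ≤ ((1 + ‖γ‖) * r) ^ k / ‖Gamma (α * k + β)‖ := by rw [mul_pow]; gcongr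

theorem succ_mul_prabhakarCoeff_succ (α β γ : ℂ) (k : ℕ) :
    (k + 1) * prabhakarCoeff α β γ (k + 1) = γ * prabhakarCoeff α (α + β) (γ + 1) k := by
  have hpoch : (ascPochhammer ℂ (k + 1)).eval γ = γ * (ascPochhammer ℂ k).eval (γ + 1) := by
    simp [ascPochhammer_succ_left]
  have hGamma : α * (k + 1 : ℕ) + β = α * k + (α + β) := by push_cast; ring
  rw [prabhakarCoeff, prabhakarCoeff, hpoch, hGamma, Nat.factorial_succ, Nat.cast_mul, mul_assoc,
    ← mul_div_assoc, Nat.cast_add_one, mul_div_mul_left _ _ (Nat.cast_add_one_ne_zero k),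
    mul_div_assoc]

theorem prabhakar_deriv (α β γ : ℂ) (hα : 0 < α.re) (z : ℂ) :
    deriv (prabhakar α β γ) z = γ * prabhakar α (α + β) (γ + 1) z := by
  have hderiv := hasDerivAt_tsum_mul_pow
    (fun r hr ↦ summable_norm_prabhakarCoeff_mul_pow hα β γ hr) z
  simp_rw [succ_mul_prabhakarCoeff_succ, mul_assoc, tsum_mul_left, ← prabhakar_eq_tsum] at hderiv
  exact hderiv.deriv
end

section
/- Differentiation identity: for real α > 0, β ∈ ℝ, γ, λ ∈ ℂ, a positive integer m, and t > 0, (d^m/dt^m)[t^{β−1} E_{α,β}^γ(λ t^α)] = t^{β−m−1} E_{α,β−m}^γ(λ t^α). -/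
open scoped Real
open Complex Filter

/-!
Write `t^(β-1) E(λ t^α) = ∑ₖ cₖ t^(αk+β-1)` with `cₖ = (γ)ₖ λ^k / (k! Γ(αk+β))`. Differentiating a
term multiplies it by `αk+β-1`, and `(αk+β-1) / Γ(αk+β) = 1 / Γ(αk+β-1)` (also at the poles, where
both sides vanish), so one derivative turns the series for `β` into the series for `β-1`.
Term-by-term differentiation is legitimate because the series converges absolutely for every `z`:
log-convexity of `Γ` gives `Γ(x+α) ≥ Γ(x) (x-1)^α`, so the ratio of consecutive terms tends to `0`.
-/

theorem Real.Gamma_mul_sub_one_rpow_le_Gamma_add {x a : ℝ} (hx : 1 < x) (ha : 0 < a) :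
    Real.Gamma x * (x - 1) ^ a ≤ Real.Gamma (x + a) := by
  have hx₁ : 0 < x - 1 := sub_pos.2 hx
  have hΓ₁ : 0 < Real.Gamma (x - 1) := Real.Gamma_pos_of_pos hx₁
  have hslope := Real.convexOn_log_Gamma.slope_mono_adjacent (Set.mem_Ioi.2 hx₁)
    (Set.mem_Ioi.2 (by linarith : 0 < x + a)) (by linarith : x - 1 < x) (by linarith : x < x + a)
  have hrec : Real.Gamma x = (x - 1) * Real.Gamma (x - 1) := by
    simpa using Real.Gamma_add_one hx₁.ne'
  rw [Function.comp_apply, Function.comp_apply, Function.comp_apply, sub_sub_cancel, div_one,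
    add_sub_cancel_left, le_div_iff₀ ha, hrec, Real.log_mul hx₁.ne' hΓ₁.ne'] at hslope
  rw [← Real.log_le_log_iff (by positivity) (Real.Gamma_pos_of_pos (by linarith)), hrec,
    Real.log_mul (by positivity) (by positivity), Real.log_mul hx₁.ne' hΓ₁.ne', Real.log_rpow hx₁]
  linarith

theorem Real.rpow_le_rpow_add_rpow {a b y : ℝ} (ha : 0 < a) (hay : a ≤ y) (hyb : y ≤ b) (p : ℝ) :
    y ^ p ≤ a ^ p + b ^ p := by
  rcases le_total 0 p with hp | hp
  · linarith [Real.rpow_le_rpow (ha.le.trans hay) hyb hp, Real.rpow_nonneg ha.le p]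
  · linarith [Real.rpow_le_rpow_of_nonpos ha hay hp,
      Real.rpow_nonneg (ha.trans_le (hay.trans hyb)).le p]

theorem Complex.mul_inv_Gamma_add_one (s : ℂ) : s * (Gamma (s + 1))⁻¹ = (Gamma s)⁻¹ := by
  rcases eq_or_ne s 0 with rfl | hs
  · simp [Gamma_zero]
  · rw [Gamma_add_one s hs, mul_inv, ← mul_assoc, mul_inv_cancel₀ hs, one_mul]

noncomputable def prabhakarTerm (α β γ z : ℂ) (k : ℕ) : ℂ :=
  (ascPochhammer ℂ k).eval γ * z ^ k / ((Nat.factorial k : ℂ) * Gamma (α * k + β))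

theorem prabhakarTerm_mul_pow (α β γ z w : ℂ) (k : ℕ) :
    prabhakarTerm α β γ (z * w) k = prabhakarTerm α β γ z k * w ^ k := by
  simp only [prabhakarTerm, mul_pow]
  ring

theorem prabhakarTerm_mul_sub_one (α β γ z : ℂ) (k : ℕ) :
    prabhakarTerm α β γ z k * (α * k + β - 1) = prabhakarTerm α (β - 1) γ z k := by
  have h := mul_inv_Gamma_add_one (α * k + β - 1)
  rw [sub_add_cancel] at h
  simp only [prabhakarTerm, ← add_sub_assoc, div_eq_mul_inv, mul_inv, ← h]
  ring

theorem norm_prabhakarTerm_succ {α : ℝ} (hα : 0 < α) (β : ℝ) (γ z : ℂ) {k : ℕ}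
    (hk : 0 < α * k + β) :
    ‖prabhakarTerm α β γ z (k + 1)‖ = ‖γ + k‖ / (k + 1) * ‖z‖ *
      (Real.Gamma (α * k + β) / Real.Gamma (α * k + β + α)) * ‖prabhakarTerm α β γ z k‖ := by
  have hΓ : 0 < Real.Gamma (α * k + β) := Real.Gamma_pos_of_pos hk
  have hΓ' : 0 < Real.Gamma (α * k + β + α) := Real.Gamma_pos_of_pos (by linarith)
  have harg : (α : ℂ) * ((k + 1 : ℕ) : ℂ) + β = ((α * k + β + α : ℝ) : ℂ) := by push_cast; ring
  have harg' : (α : ℂ) * (k : ℂ) + β = ((α * k + β : ℝ) : ℂ) := by push_cast; ring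
  simp only [prabhakarTerm, harg, harg', ascPochhammer_succ_eval, Nat.factorial_succ, pow_succ,
    Gamma_ofReal, norm_div, norm_mul, norm_pow, Complex.norm_natCast, norm_real,
    Real.norm_of_nonneg hΓ.le, Real.norm_of_nonneg hΓ'.le]
  generalize Real.Gamma (α * k + β) = G at hΓ ⊢
  generalize Real.Gamma (α * k + β + α) = G' at hΓ' ⊢
  push_cast
  field_simp

theorem norm_prabhakarTerm_succ_le {α : ℝ} (hα : 0 < α) (β : ℝ) (γ z : ℂ) {k : ℕ}
    (hk : 1 < α * k + β) :
    ‖prabhakarTerm α β γ z (k + 1)‖ ≤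
      (‖γ‖ + 1) * ‖z‖ / (α * k + β - 1) ^ α * ‖prabhakarTerm α β γ z k‖ := by
  have hk₀ : 0 < α * k + β := by linarith
  have hγk : ‖γ + k‖ / (k + 1) ≤ ‖γ‖ + 1 := by
    rw [div_le_iff₀ (by positivity)]
    calc ‖γ + k‖ ≤ ‖γ‖ + k := by simpa using norm_add_le γ k
      _ ≤ (‖γ‖ + 1) * (k + 1) := by nlinarith [norm_nonneg γ, k.cast_nonneg (α := ℝ)]
  have hΓ : Real.Gamma (α * k + β) / Real.Gamma (α * k + β + α) ≤ 1 / (α * k + β - 1) ^ α := by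
    rw [div_le_div_iff₀ (Real.Gamma_pos_of_pos (by linarith)) (by have := sub_pos.2 hk; positivity),
      one_mul]
    exact Real.Gamma_mul_sub_one_rpow_le_Gamma_add hk hα
  rw [norm_prabhakarTerm_succ hα β γ z hk₀, ← mul_one_div ((‖γ‖ + 1) * ‖z‖)]
  gcongr

theorem summable_norm_prabhakarTerm {α : ℝ} (hα : 0 < α) (β : ℝ) (γ z : ℂ) :
    Summable fun k => ‖prabhakarTerm α β γ z k‖ := by
  have hlin : Tendsto (fun k : ℕ => α * k + β - 1) atTop atTop :=
    tendsto_atTop_add_const_right _ _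
      (tendsto_atTop_add_const_right _ _ (tendsto_natCast_atTop_atTop.const_mul_atTop hα))
  have hratio : Tendsto (fun k : ℕ => (‖γ‖ + 1) * ‖z‖ / (α * k + β - 1) ^ α) atTop (nhds 0) :=
    ((tendsto_rpow_atTop hα).comp hlin).const_div_atTop _
  refine summable_of_ratio_norm_eventually_le (r := 1 / 2) (by norm_num) ?_
  filter_upwards [hlin.eventually_gt_atTop 0,
    hratio.eventually_le_const (by norm_num : (0 : ℝ) < 1 / 2)] with k hk hr
  simp only [norm_norm]
  calc ‖prabhakarTerm α β γ z (k + 1)‖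
      ≤ (‖γ‖ + 1) * ‖z‖ / (α * k + β - 1) ^ α * ‖prabhakarTerm α β γ z k‖ :=
        norm_prabhakarTerm_succ_le hα β γ z (by linarith)
    _ ≤ 1 / 2 * ‖prabhakarTerm α β γ z k‖ := by gcongr

noncomputable def prabhakarKernel (α β : ℝ) (γ lam : ℂ) (u : ℝ) : ℂ :=
  ((u ^ (β - 1) : ℝ) : ℂ) * prabhakar α β γ (lam * ((u ^ α : ℝ) : ℂ))

theorem prabhakarKernel_eq_tsum (α β : ℝ) (γ lam : ℂ) {u : ℝ} (hu : 0 < u) :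
    prabhakarKernel α β γ lam u =
      ∑' k : ℕ, prabhakarTerm α β γ lam k * ((u ^ (α * k + β - 1) : ℝ) : ℂ) := by
  rw [prabhakarKernel, prabhakar, ← tsum_mul_left]
  refine tsum_congr fun k => ?_
  rw [← prabhakarTerm, prabhakarTerm_mul_pow, ← ofReal_pow, ← Real.rpow_natCast,
    ← Real.rpow_mul hu.le, add_sub_assoc, Real.rpow_add hu, ofReal_mul]
  ring

theorem hasDerivAt_prabhakarTerm_mul_rpow (α β : ℝ) (γ lam : ℂ) (k : ℕ) {y : ℝ} (hy : 0 < y) :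
    HasDerivAt (fun u : ℝ => prabhakarTerm α β γ lam k * ((u ^ (α * k + β - 1) : ℝ) : ℂ))
      (prabhakarTerm α (β - 1 : ℝ) γ lam k * ((y ^ (α * k + (β - 1) - 1) : ℝ) : ℂ)) y := by
  have hpow := (Real.hasDerivAt_rpow_const (p := α * k + β - 1) (Or.inl hy.ne')).ofReal_comp
  refine (hpow.const_mul (prabhakarTerm α β γ lam k)).congr_deriv ?_
  rw [ofReal_mul, ← mul_assoc]
  push_cast
  rw [prabhakarTerm_mul_sub_one]
  ring_nf

theorem hasDerivAt_prabhakarKernel {α : ℝ} (hα : 0 < α) (β : ℝ) (γ lam : ℂ) {t : ℝ}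
    (ht : 0 < t) :
    HasDerivAt (prabhakarKernel α β γ lam) (prabhakarKernel α (β - 1) γ lam t) t := by
  set C := (t / 2) ^ (β - 2) + (2 * t) ^ (β - 2)
  have hbound : ∀ (k : ℕ), ∀ y ∈ Set.Ioo (t / 2) (2 * t),
      ‖prabhakarTerm α (β - 1 : ℝ) γ lam k * ((y ^ (α * k + (β - 1) - 1) : ℝ) : ℂ)‖ ≤
        ‖prabhakarTerm α (β - 1 : ℝ) γ (lam * ((2 * t) ^ α : ℝ)) k‖ * C := by
    intro k y ⟨hy₁, hy₂⟩
    have hy : 0 < y := by linarith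
    have h2t : 0 < 2 * t := by linarith
    rw [prabhakarTerm_mul_pow, norm_mul, norm_mul, norm_real, Real.norm_of_nonneg (by positivity),
      norm_pow, norm_real, Real.norm_of_nonneg (by positivity), ← Real.rpow_natCast,
      ← Real.rpow_mul h2t.le, mul_assoc, show α * k + (β - 1) - 1 = α * k + (β - 2) by ring,
      Real.rpow_add hy]
    gcongr
    exact Real.rpow_le_rpow_add_rpow (by linarith) hy₁.le hy₂.le _
  have hsum_t :
      Summable fun k : ℕ => prabhakarTerm α β γ lam k * ((t ^ (α * k + β - 1) : ℝ) : ℂ) := by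
    refine ((summable_norm_prabhakarTerm hα β γ (lam * ((t ^ α : ℝ) : ℂ))).of_norm.mul_right
      ((t ^ (β - 1) : ℝ) : ℂ)).congr fun k => ?_
    rw [prabhakarTerm_mul_pow, ← ofReal_pow, ← Real.rpow_natCast, ← Real.rpow_mul ht.le,
      add_sub_assoc, Real.rpow_add ht, ofReal_mul, mul_assoc]
  have ht_mem : t ∈ Set.Ioo (t / 2) (2 * t) := ⟨by linarith, by linarith⟩
  have hderiv := hasDerivAt_tsum_of_isPreconnected
    ((summable_norm_prabhakarTerm hα (β - 1) γ (lam * ((2 * t) ^ α : ℝ))).mul_right C)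
    isOpen_Ioo isPreconnected_Ioo
    (fun k y hy => hasDerivAt_prabhakarTerm_mul_rpow α β γ lam k (by linarith [hy.1] : 0 < y))
    hbound ht_mem hsum_t ht_mem
  rw [prabhakarKernel_eq_tsum α (β - 1) γ lam ht]
  refine hderiv.congr_of_eventuallyEq ?_
  filter_upwards [Ioi_mem_nhds ht] with u hu
  exact prabhakarKernel_eq_tsum α β γ lam hu

theorem iteratedDeriv_prabhakarKernel {α : ℝ} (hα : 0 < α) (γ lam : ℂ) (m : ℕ) (β : ℝ) {t : ℝ}
    (ht : 0 < t) :
    iteratedDeriv m (prabhakarKernel α β γ lam) t = prabhakarKernel α (β - m) γ lam t := by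
  induction m generalizing β with
  | zero => simp
  | succ n ih =>
    have hderiv :
        deriv (prabhakarKernel α β γ lam) =ᶠ[nhds t] prabhakarKernel α (β - 1) γ lam := by
      filter_upwards [Ioi_mem_nhds ht] with u hu
      exact (hasDerivAt_prabhakarKernel hα β γ lam hu).deriv
    rw [iteratedDeriv_succ', hderiv.iteratedDeriv_eq n, ih]
    push_cast
    ring_nf

theorem prabhakar_iteratedDeriv_kernel_general (α β : ℝ) (hα : 0 < α) (γ lam : ℂ)
    (m : ℕ) (t : ℝ) (ht : 0 < t) :
    iteratedDeriv m
        (fun u : ℝ => ((u ^ (β - 1) : ℝ) : ℂ) * prabhakar α β γ (lam * ((u ^ α : ℝ) : ℂ))) t =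
      ((t ^ (β - m - 1) : ℝ) : ℂ) * prabhakar α (β - m) γ (lam * ((t ^ α : ℝ) : ℂ)) :=
  (iteratedDeriv_prabhakarKernel hα γ lam m β ht).trans (by simp [prabhakarKernel])

theorem prabhakar_iteratedDeriv_kernel (α β : ℝ) (hα : 0 < α) (γ lam : ℂ)
    (m : ℕ) (hm : 0 < m) (t : ℝ) (ht : 0 < t) :
    iteratedDeriv m
        (fun u : ℝ => ((u ^ (β - 1) : ℝ) : ℂ) * prabhakar α β γ (lam * ((u ^ α : ℝ) : ℂ))) t =
      ((t ^ (β - m - 1) : ℝ) : ℂ) * prabhakar α (β - m) γ (lam * ((t ^ α : ℝ) : ℂ)) :=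
  prabhakar_iteratedDeriv_kernel_general α β hα γ lam m t ht
end
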